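/- arXiv:2401.14803 — 3 statements merged into one kernel-verified Lean document; each statement's English description precedes it below -/
import Mathlib

section
/- Let G be an amenable finitely generated group with exponential growth. Then G does not have the Rapid Decay property. -/
open scoped BigOperators

/-- Word length of `g` with respect to a generating set `S`. -/
noncomputable def wordLength {G : Type*} [Group G] (S : Set G) (g : G) : ℕ :=
  sInf {n : ℕ | ∃ l : List G, (∀ x ∈ l, x ∈ S ∨ x⁻¹ ∈ S) ∧ l.length = n ∧ l.prod = g}

/-- Convolution of finitely supported functions. -/
noncomputable def conv {G : Type*} [Group G] (f g : G →₀ ℝ) : G → ℝ :=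
  fun γ => ∑ μ ∈ f.support, f μ * g (μ⁻¹ * γ)

/-- The ℓ²-norm. -/
noncomputable def l2norm {G : Type*} (f : G → ℝ) : ℝ :=
  Real.sqrt (∑' x, f x ^ 2)

/-- The ℓ¹-norm of a finitely supported function. -/
noncomputable def l1norm {G : Type*} (f : G →₀ ℝ) : ℝ :=
  ∑ x ∈ f.support, |f x|

/-- Operator norm of left convolution by `f` on `ℓ²(G)`. -/
noncomputable def opNorm {G : Type*} [Group G] (f : G →₀ ℝ) : ℝ :=
  sSup {x : ℝ | ∃ g : G →₀ ℝ, (∀ γ, 0 ≤ g γ) ∧ l2norm (g : G → ℝ) ≤ 1 ∧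
    x = l2norm (conv f g)}

/-!
Test the Rapid Decay inequality on the indicator `1_B` of the ball `B` of radius `n`:
amenability turns its left side into `‖1_B‖₁ = |B|`, while the right side is
`P(n) ‖1_B‖₂ = P(n) √|B|`. Hence `|B| ≤ P(n)²`, and the exponential growth of `|B|`
contradicts this polynomial bound for large `n`.
-/

open Filter Polynomial

theorem Polynomial.eventually_eval_lt_pow (Q : ℝ[X]) {a : ℝ} (ha : 1 < a) :
    ∀ᶠ n : ℕ in atTop, Q.eval (n : ℝ) < a ^ n := by
  have hmonomial :
      (fun n : ℕ => Q.eval (n : ℝ)) =O[atTop] fun n : ℕ => (n : ℝ) ^ Q.natDegree := by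
    have h := Q.isBigO_atTop_of_degree_le (X ^ Q.natDegree)
      (by rw [degree_X_pow]; exact degree_le_natDegree)
    simpa [Function.comp_def] using h.comp_tendsto tendsto_natCast_atTop_atTop
  have hlittle := hmonomial.trans_isLittleO (isLittleO_pow_const_const_pow_of_one_lt _ ha)
  filter_upwards [hlittle.bound one_half_pos] with n hn
  have hpow : 0 < a ^ n := pow_pos (zero_lt_one.trans ha) n
  rw [Real.norm_eq_abs, Real.norm_of_nonneg hpow.le] at hn
  linarith [le_abs_self (Q.eval (n : ℝ))]

theorem le_sq_of_le_mul_sqrt {N c : ℝ} (hN : 0 ≤ N) (h : N ≤ c * √N) : N ≤ c ^ 2 := by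
  rcases hN.eq_or_lt with rfl | hpos
  · positivity
  have hsqrt : 0 < √N := Real.sqrt_pos.2 hpos
  have hsqrt_le : √N ≤ c := by
    nlinarith [Real.mul_self_sqrt hN]
  exact (Real.sqrt_le_left (hsqrt.le.trans hsqrt_le)).1 hsqrt_le

section FinsetIndicator

variable {α : Type*}

noncomputable def finsetIndicator (s : Finset α) : α →₀ ℝ :=
  Finsupp.indicator s fun _ _ => 1

theorem finsetIndicator_apply [DecidableEq α] (s : Finset α) (x : α) :
    finsetIndicator s x = if x ∈ s then 1 else 0 := by
  rw [finsetIndicator, Finsupp.indicator_apply, dite_eq_ite]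

theorem finsetIndicator_nonneg (s : Finset α) (x : α) : 0 ≤ finsetIndicator s x := by
  classical
  rw [finsetIndicator_apply]
  split_ifs <;> norm_num

theorem support_finsetIndicator (s : Finset α) : (finsetIndicator s).support = s := by
  classical
  ext x
  simp [Finsupp.mem_support_iff, finsetIndicator_apply]

theorem l1norm_finsetIndicator (s : Finset α) : l1norm (finsetIndicator s) = s.card := by
  classical
  rw [l1norm, support_finsetIndicator]
  simp +contextual [finsetIndicator_apply]

theorem l2norm_finsetIndicator (s : Finset α) :
    l2norm (finsetIndicator s : α → ℝ) = √(s.card : ℝ) := by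
  classical
  rw [l2norm, tsum_eq_sum (s := s) fun x hx => by simp [finsetIndicator_apply, hx]]
  congr 1
  simp [finsetIndicator_apply]

theorem card_le_sq_of_l1norm_finsetIndicator_le (s : Finset α) {c : ℝ}
    (h : l1norm (finsetIndicator s) ≤ c * l2norm (finsetIndicator s : α → ℝ)) :
    (s.card : ℝ) ≤ c ^ 2 := by
  rw [l1norm_finsetIndicator, l2norm_finsetIndicator] at h
  exact le_sq_of_le_mul_sqrt (Nat.cast_nonneg _) h

end FinsetIndicator

theorem stmt14_general {G : Type*} [Group G] (S : Set G)
    (hLeptin : ∀ f : G →₀ ℝ, (∀ x, 0 ≤ f x) → opNorm f = l1norm f)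
    (hexp : ∃ a : ℝ, 1 < a ∧ ∀ n : ℕ, 1 ≤ n →
      a ^ n ≤ (Nat.card {g : G | wordLength S g ≤ n} : ℝ)) :
    ¬ ∃ P : Polynomial ℝ, ∀ r : ℝ, 0 < r → ∀ f : G →₀ ℝ, (∀ x, 0 ≤ f x) →
      (∀ x ∈ f.support, (wordLength S x : ℝ) ≤ r) →
      opNorm f ≤ P.eval r * l2norm (f : G → ℝ) := by
  rintro ⟨P, hRD⟩
  obtain ⟨a, ha, hgrowth⟩ := hexp
  obtain ⟨n, hlt, hn⟩ := (((P ^ 2).eventually_eval_lt_pow ha).and (eventually_ge_atTop 1)).exists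
  have hgrowth_n := hgrowth n hn
  rw [Nat.card_coe_set_eq] at hgrowth_n
  have hball : {g : G | wordLength S g ≤ n}.Finite :=
    Set.finite_of_ncard_pos <| by
      exact_mod_cast (pow_pos (zero_lt_one.trans ha) n).trans_le hgrowth_n
  have hcard : (hball.toFinset.card : ℝ) ≤ P.eval (n : ℝ) ^ 2 := by
    refine card_le_sq_of_l1norm_finsetIndicator_le _ ?_
    rw [← hLeptin _ (finsetIndicator_nonneg _)]
    refine hRD n (by exact_mod_cast hn) _ (finsetIndicator_nonneg _) fun x hx => ?_
    rw [support_finsetIndicator, Set.Finite.mem_toFinset] at hx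
    exact_mod_cast hx
  rw [Set.ncard_eq_toFinset_card _ hball] at hgrowth_n
  rw [eval_pow] at hlt
  linarith

/-- An amenable finitely generated group of exponential growth does not have the Rapid
Decay property.  Amenability is used via Leptin's characterization: `‖f‖_* = ‖f‖₁`
for nonnegative finitely supported `f`. -/
theorem stmt14 {G : Type*} [Group G] (S : Set G) (hSfin : S.Finite)
    (hSgen : Subgroup.closure S = ⊤)
    (hLeptin : ∀ f : G →₀ ℝ, (∀ x, 0 ≤ f x) → opNorm f = l1norm f)
    (hexp : ∃ a : ℝ, 1 < a ∧ ∀ n : ℕ, 1 ≤ n →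
      a ^ n ≤ (Nat.card {g : G | wordLength S g ≤ n} : ℝ)) :
    ¬ ∃ P : Polynomial ℝ, ∀ r : ℝ, 0 < r → ∀ f : G →₀ ℝ, (∀ x, 0 ≤ f x) →
      (∀ x ∈ f.support, (wordLength S x : ℝ) ≤ r) →
      opNorm f ≤ P.eval r * l2norm (f : G → ℝ) :=
  stmt14_general S hLeptin hexp
end

section
/- Let N be a finitely generated group and α an automorphism of N of polynomial growth, i.e. there is a polynomial P with L_N(αⁿ(x)) ≤ P(n)·L_N(x) for all x ∈ N and n ∈ ℤ, where L_N is word length. If N has polynomial growth, then the semidirect product N ⋊_α ℤ has polynomial growth. -/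
/-!
A word of length `m ≤ n` in the letters `inl s^{±1}` and `inr (±1)` of `N ⋊_α ℤ` evaluates to
`(α^{k₁} s₁ ⋯ α^{kₘ} sₘ, k)` with all `|kᵢ|, |k| ≤ n`, and each `α^{kᵢ} sᵢ` has `N`-length at most
`P(n)`, where `P` is the growth polynomial of `α` with its coefficients replaced by their absolute
values (to make it nonnegative and monotone). So the `n`-ball of `N ⋊_α ℤ` injects into the product
of the `n P(n)`-ball of `N` with `[-n, n]`, whose size is polynomial in `n`.
-/

namespace Polynomial

noncomputable def absMajorant (P : ℝ[X]) : ℝ[X] :=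
  ∑ i ∈ Finset.range (P.natDegree + 1), C |P.coeff i| * X ^ i

variable (P : ℝ[X]) {x y : ℝ}

lemma eval_absMajorant :
    P.absMajorant.eval x = ∑ i ∈ Finset.range (P.natDegree + 1), |P.coeff i| * x ^ i := by
  simp [absMajorant, eval_finsetSum]

lemma absMajorant_nonneg (hx : 0 ≤ x) : 0 ≤ P.absMajorant.eval x := by
  rw [eval_absMajorant]
  exact Finset.sum_nonneg fun i _ => by positivity

lemma eval_le_absMajorant (hx : 0 ≤ x) : P.eval x ≤ P.absMajorant.eval x := by
  rw [eval_absMajorant, eval_eq_sum_range]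
  refine Finset.sum_le_sum fun i _ => ?_
  calc P.coeff i * x ^ i ≤ |P.coeff i * x ^ i| := le_abs_self _
    _ = |P.coeff i| * x ^ i := by rw [abs_mul, abs_pow, abs_of_nonneg hx]

lemma absMajorant_mono (hx : 0 ≤ x) (hxy : x ≤ y) :
    P.absMajorant.eval x ≤ P.absMajorant.eval y := by
  rw [eval_absMajorant, eval_absMajorant]
  gcongr

end Polynomial

section WordLength

variable {G : Type*} [Group G] {S : Set G}

lemma wordLength_list_prod_le {l : List G} (hl : ∀ x ∈ l, x ∈ S ∨ x⁻¹ ∈ S) :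
    wordLength S l.prod ≤ l.length :=
  Nat.sInf_le ⟨l, hl, rfl, rfl⟩

lemma exists_list_length_eq_wordLength (hS : Subgroup.closure S = ⊤) (g : G) :
    ∃ l : List G, (∀ x ∈ l, x ∈ S ∨ x⁻¹ ∈ S) ∧ l.length = wordLength S g ∧ l.prod = g := by
  have hg : g ∈ Submonoid.closure (S ∪ S⁻¹) := by
    rw [← Subgroup.closure_toSubmonoid, hS]; trivial
  obtain ⟨l, hl, rfl⟩ := Submonoid.exists_list_of_mem_closure hg
  refine Nat.sInf_mem (s := {n | ∃ l' : List G, (∀ x ∈ l', x ∈ S ∨ x⁻¹ ∈ S) ∧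
    l'.length = n ∧ l'.prod = l.prod}) ⟨l.length, l, fun x hx => ?_, rfl, rfl⟩
  simpa only [Set.mem_union, Set.mem_inv] using hl x hx

lemma wordLength_one : wordLength S (1 : G) = 0 :=
  Nat.le_zero.1 (wordLength_list_prod_le (l := []) (by simp))

lemma wordLength_le_one {s : G} (hs : s ∈ S ∨ s⁻¹ ∈ S) : wordLength S s ≤ 1 := by
  simpa using wordLength_list_prod_le (l := [s]) (by simpa using hs)

lemma wordLength_mul_le (hS : Subgroup.closure S = ⊤) (a b : G) :
    wordLength S (a * b) ≤ wordLength S a + wordLength S b := by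
  obtain ⟨la, hla, hlena, rfl⟩ := exists_list_length_eq_wordLength hS a
  obtain ⟨lb, hlb, hlenb, rfl⟩ := exists_list_length_eq_wordLength hS b
  rw [← hlena, ← hlenb, ← List.length_append, ← List.prod_append]
  exact wordLength_list_prod_le <| by
    simpa only [List.mem_append, or_imp, forall_and] using ⟨hla, hlb⟩

lemma finite_setOf_wordLength_le (hSfin : S.Finite) (hS : Subgroup.closure S = ⊤) (n : ℕ) :
    {g : G | wordLength S g ≤ n}.Finite := by
  have : Finite ↥(S ∪ S⁻¹) := (hSfin.union hSfin.inv).to_subtype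
  refine ((List.finite_length_le ↥(S ∪ S⁻¹) n).image fun l => (l.map Subtype.val).prod).subset ?_
  intro g hg
  obtain ⟨l, hl, hlen, rfl⟩ := exists_list_length_eq_wordLength hS g
  refine ⟨l.attach.map fun x => ⟨x.1, ?_⟩, by simpa [hlen] using hg, by simp⟩
  simpa only [Set.mem_union, Set.mem_inv] using hl x.1 x.2

open Polynomial in
lemma wordLength_zpow_apply_le_ceil {α : MulAut G} {P : ℝ[X]}
    (hP : ∀ (x : G) (n : ℤ),
      (wordLength S ((α ^ n) x) : ℝ) ≤ P.eval ((|n| : ℤ) : ℝ) * wordLength S x)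
    {s : G} (hs : s ∈ S ∨ s⁻¹ ∈ S) {e : ℤ} {n : ℕ} (he : |e| ≤ n) :
    wordLength S ((α ^ e) s) ≤ ⌈P.absMajorant.eval (n : ℝ)⌉₊ := by
  have he₀ : (0 : ℝ) ≤ ((|e| : ℤ) : ℝ) := by positivity
  have he' : ((|e| : ℤ) : ℝ) ≤ n := by exact_mod_cast he
  have hs₁ : (wordLength S s : ℝ) ≤ 1 := by exact_mod_cast wordLength_le_one hs
  refine Nat.cast_le.1 (le_trans ?_ (Nat.le_ceil _))
  calc (wordLength S ((α ^ e) s) : ℝ) ≤ P.eval ((|e| : ℤ) : ℝ) * wordLength S s := hP s e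
    _ ≤ P.absMajorant.eval ((|e| : ℤ) : ℝ) * wordLength S s := by
        gcongr; exact eval_le_absMajorant P he₀
    _ ≤ P.absMajorant.eval (n : ℝ) * 1 := by
        gcongr
        · exact absMajorant_nonneg P (Nat.cast_nonneg n)
        · exact absMajorant_mono P he₀ he'
    _ = P.absMajorant.eval (n : ℝ) := mul_one _

end WordLength

namespace SemidirectProduct

open Multiplicative

variable {N : Type*} [Group N] {S : Set N} {α : MulAut N}

local notation "N⋊ℤ" => N ⋊[zpowersHom (MulAut N) α] Multiplicative ℤ

variable (S α) in
def zGenerators : Set (N⋊ℤ) := inl '' S ∪ {inr (ofAdd 1)}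

lemma inr_ofAdd_eq_zpow (k : ℤ) : (inr (ofAdd k) : N⋊ℤ) = inr (ofAdd 1) ^ k := by
  rw [← map_zpow, ← ofAdd_zsmul, smul_eq_mul, mul_one]

lemma closure_zGenerators (hS : Subgroup.closure S = ⊤) :
    Subgroup.closure (zGenerators S α) = ⊤ := by
  rw [eq_top_iff]
  rintro g -
  rw [← inl_left_mul_inr_right g, ← ofAdd_toAdd g.right, inr_ofAdd_eq_zpow]
  have hinr : (inr (ofAdd 1) : N⋊ℤ) ∈ Subgroup.closure (zGenerators S α) :=
    Subgroup.subset_closure (Or.inr rfl)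
  refine mul_mem ?_ (zpow_mem hinr _)
  have : (Subgroup.closure S).map inl ≤ Subgroup.closure (zGenerators S α) := by
    rw [Subgroup.map_le_iff_le_comap, Subgroup.closure_le]
    exact fun s hs => Subgroup.subset_closure (Or.inl ⟨s, hs, rfl⟩)
  exact this ⟨g.left, hS ▸ trivial, rfl⟩

lemma eq_inl_or_eq_inr_of_mem_zGenerators {x : N⋊ℤ}
    (hx : x ∈ zGenerators S α ∨ x⁻¹ ∈ zGenerators S α) :
    (∃ s, (s ∈ S ∨ s⁻¹ ∈ S) ∧ x = inl s) ∨ ∃ ε : ℤ, |ε| = 1 ∧ x = inr (ofAdd ε) := by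
  rcases hx with (⟨s, hs, rfl⟩ | rfl) | (⟨s, hs, hsx⟩ | hx)
  · exact Or.inl ⟨s, Or.inl hs, rfl⟩
  · exact Or.inr ⟨1, abs_one, rfl⟩
  · refine Or.inl ⟨s⁻¹, Or.inr (by rwa [inv_inv]), ?_⟩
    rw [map_inv, hsx, inv_inv]
  · refine Or.inr ⟨-1, by norm_num, ?_⟩
    rw [← inv_inv x, Set.mem_singleton_iff.1 hx, ← map_inv]
    rfl

lemma wordLength_list_prod_left_le (hS : Subgroup.closure S = ⊤) {n B : ℕ}
    (hB : ∀ s, (s ∈ S ∨ s⁻¹ ∈ S) → ∀ e : ℤ, |e| ≤ n → wordLength S ((α ^ e) s) ≤ B)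
    {l : List (N⋊ℤ)} (hl : ∀ x ∈ l, x ∈ zGenerators S α ∨ x⁻¹ ∈ zGenerators S α)
    (hlen : l.length ≤ n) :
    |toAdd l.prod.right| ≤ l.length ∧ wordLength S l.prod.left ≤ l.length * B := by
  induction l using List.reverseRecOn with
  | nil => simp [wordLength_one]
  | append_singleton l x ih =>
    simp only [List.mem_append, List.mem_singleton, or_imp, forall_and, forall_eq] at hl
    rw [List.length_append, List.length_singleton] at hlen ⊢
    obtain ⟨hright, hleft⟩ := ih hl.1 (by omega)
    rw [List.prod_append, List.prod_singleton]
    rcases eq_inl_or_eq_inr_of_mem_zGenerators hl.2 with ⟨s, hs, rfl⟩ | ⟨ε, hε, rfl⟩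
    · refine ⟨by simp only [mul_right, right_inl, mul_one]; omega, ?_⟩
      rw [mul_left, left_inl, zpowersHom_apply, add_mul, one_mul]
      exact (wordLength_mul_le hS _ _).trans (add_le_add hleft (hB s hs _ (by omega)))
    · refine ⟨?_, ?_⟩
      · rw [mul_right, right_inr, toAdd_mul, toAdd_ofAdd]
        push_cast
        exact (abs_add_le _ _).trans (by omega)
      · rw [mul_left, left_inr, map_one, mul_one]
        exact hleft.trans (Nat.mul_le_mul_right _ (Nat.le_succ _))

lemma wordLength_left_le_and_abs_right_le (hS : Subgroup.closure S = ⊤) {n B : ℕ}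
    (hB : ∀ s, (s ∈ S ∨ s⁻¹ ∈ S) → ∀ e : ℤ, |e| ≤ n → wordLength S ((α ^ e) s) ≤ B)
    {g : N⋊ℤ} (hg : wordLength (zGenerators S α) g ≤ n) :
    wordLength S g.left ≤ n * B ∧ |toAdd g.right| ≤ n := by
  obtain ⟨l, hl, hlen, rfl⟩ := exists_list_length_eq_wordLength (closure_zGenerators hS) g
  obtain ⟨hright, hleft⟩ := wordLength_list_prod_left_le hS hB hl (hlen ▸ hg)
  rw [hlen] at hright hleft
  exact ⟨hleft.trans (Nat.mul_le_mul_right _ hg), hright.trans (by exact_mod_cast hg)⟩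

lemma card_setOf_wordLength_zGenerators_le (hSfin : S.Finite) (hS : Subgroup.closure S = ⊤)
    {n B : ℕ}
    (hB : ∀ s, (s ∈ S ∨ s⁻¹ ∈ S) → ∀ e : ℤ, |e| ≤ n → wordLength S ((α ^ e) s) ≤ B) :
    Nat.card {g : N⋊ℤ | wordLength (zGenerators S α) g ≤ n} ≤
      Nat.card {x : N | wordLength S x ≤ n * B} * (2 * n + 1) := by
  rw [Nat.card_coe_set_eq, Nat.card_coe_set_eq]
  calc _ ≤ ({x : N | wordLength S x ≤ n * B} ×ˢ Set.Icc (-(n : ℤ)) n).ncard := by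
        refine Set.ncard_le_ncard_of_injOn (fun g => (g.left, toAdd g.right)) (fun g hg => ?_)
          (fun g _ h _ hgh => ?_)
          ((finite_setOf_wordLength_le hSfin hS _).prod (Set.finite_Icc _ _))
        · obtain ⟨hleft, hright⟩ := wordLength_left_le_and_abs_right_le hS hB hg
          exact ⟨hleft, abs_le.1 hright⟩
        · simp only [Prod.mk.injEq, EmbeddingLike.apply_eq_iff_eq] at hgh
          exact SemidirectProduct.ext hgh.1 hgh.2
    _ = _ := by
        rw [Set.ncard_prod, ← Finset.coe_Icc, Set.ncard_coe_finset, Int.card_Icc]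
        congr
        omega

end SemidirectProduct

/-- If `α` is an automorphism of a finitely generated group `N` whose iterates grow at
most polynomially, and `N` has polynomial growth, then `N ⋊_α ℤ` has polynomial
growth. -/
theorem stmt16 {N : Type*} [Group N] (S : Set N) (hSfin : S.Finite)
    (hSgen : Subgroup.closure S = ⊤)
    (α : MulAut N)
    (hα : ∃ P : Polynomial ℝ, ∀ (x : N) (n : ℤ),
      (wordLength S ((α ^ n) x) : ℝ) ≤ P.eval ((|n| : ℤ) : ℝ) * (wordLength S x : ℝ))
    (hN : ∃ P : Polynomial ℝ, ∀ n : ℕ,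
      (Nat.card {g : N | wordLength S g ≤ n} : ℝ) ≤ P.eval (n : ℝ)) :
    ∃ P : Polynomial ℝ, ∀ n : ℕ,
      (Nat.card {g : SemidirectProduct N (Multiplicative ℤ) (zpowersHom (MulAut N) α) |
          wordLength
            (SemidirectProduct.inl '' S ∪
              {SemidirectProduct.inr (Multiplicative.ofAdd (1 : ℤ))}) g ≤ n} : ℝ)
        ≤ P.eval (n : ℝ) := by
  obtain ⟨P, hP⟩ := hα
  obtain ⟨Q, hQ⟩ := hN
  refine ⟨Q.absMajorant.comp (.X * (P.absMajorant + 1)) * (2 * .X + 1), fun n => ?_⟩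
  have hcard := SemidirectProduct.card_setOf_wordLength_zGenerators_le hSfin hSgen
    fun s hs e he => wordLength_zpow_apply_le_ceil hP hs (n := n) he
  have hM : ((n * ⌈P.absMajorant.eval (n : ℝ)⌉₊ : ℕ) : ℝ) ≤
      n * (P.absMajorant.eval (n : ℝ) + 1) := by
    push_cast
    gcongr
    exact (Nat.ceil_lt_add_one (P.absMajorant_nonneg (Nat.cast_nonneg n))).le
  calc _ ≤ (Nat.card {x : N | wordLength S x ≤ n * ⌈P.absMajorant.eval (n : ℝ)⌉₊} : ℝ) *
        (2 * n + 1) := by exact_mod_cast hcard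
    _ ≤ Q.absMajorant.eval (n * (P.absMajorant.eval (n : ℝ) + 1)) * (2 * n + 1) := by
        gcongr
        exact (hQ _).trans ((Q.eval_le_absMajorant (Nat.cast_nonneg _)).trans
          (Q.absMajorant_mono (Nat.cast_nonneg _) hM))
    _ = _ := by simp
end

section
/- Let G₁, G₂ be finitely generated groups, each with the Rapid Decay property. Then the direct product G₁ × G₂ has the Rapid Decay property (with respect to the sum of the word lengths). -/
open scoped BigOperators

/-- The Rapid Decay property for a group equipped with a length function `L`. -/
def HasRD (G : Type*) [Group G] (L : G → ℝ) : Prop :=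
  ∃ P : Polynomial ℝ, ∀ r : ℝ, 0 < r → ∀ f g : G →₀ ℝ,
    (∀ x, 0 ≤ f x) → (∀ x, 0 ≤ g x) → (∀ x ∈ f.support, L x ≤ r) →
    l2norm (conv f g) ≤ P.eval r * l2norm (f : G → ℝ) * l2norm (g : G → ℝ)

/-! Slice `f : G₁ × G₂ →₀ ℝ` along the first factor and record the ℓ²-norms of the slices in
`fiberNorm f : G₁ →₀ ℝ`, which has the same ℓ²-norm as `f`. The slice of `f * g` over `γ₁` is
`∑ₐ f(a, ·) * g(a⁻¹γ₁, ·)`, so the triangle inequality and RD for `G₂` bound its norm by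
`P₂(r) · (fiberNorm f * fiberNorm g)(γ₁)`; RD for `G₁`, applied to the fiber norms, then gives
`‖f * g‖₂ ≤ P₂(r) P₁(r) ‖f‖₂ ‖g‖₂`. Since lengths are nonnegative, the slices of `f` and
`fiberNorm f` stay in the balls of radius `r`, and replacing `P₂` by `P₂² + 1` makes `P₂(r) ≥ 0`. -/

section L2

variable {α β : Type*}

lemma l2norm_nonneg (f : α → ℝ) : 0 ≤ l2norm f := Real.sqrt_nonneg _

lemma l2norm_eq_sqrt_sum {f : α → ℝ} {s : Finset α} (hs : ∀ x ∉ s, f x = 0) :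
    l2norm f = √(∑ x ∈ s, f x ^ 2) := by
  rw [l2norm, tsum_eq_sum fun x hx => by rw [hs x hx, zero_pow two_ne_zero]]

lemma l2norm_sq_eq_sum {f : α → ℝ} {s : Finset α} (hs : ∀ x ∉ s, f x = 0) :
    l2norm f ^ 2 = ∑ x ∈ s, f x ^ 2 := by
  rw [l2norm_eq_sqrt_sum hs, Real.sq_sqrt (by positivity)]

lemma l2norm_sq_finsupp (f : α →₀ ℝ) : l2norm f ^ 2 = f.sum fun _ c => c ^ 2 :=
  l2norm_sq_eq_sum fun _ => Finsupp.notMem_support_iff.mp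

lemma l2norm_const_mul {c : ℝ} (hc : 0 ≤ c) (f : α → ℝ) :
    l2norm (fun x => c * f x) = c * l2norm f := by
  simp only [l2norm, mul_pow, tsum_mul_left, Real.sqrt_mul (sq_nonneg c), Real.sqrt_sq hc]

lemma sqrt_sum_sq_sum_le {ι : Type*} (s : Finset ι) (t : Finset α) (v : ι → α → ℝ) :
    √(∑ x ∈ t, (∑ i ∈ s, v i x) ^ 2) ≤ ∑ i ∈ s, √(∑ x ∈ t, v i x ^ 2) := by
  have := norm_sum_le s fun i => (WithLp.toLp 2 fun x : t => v i x : EuclideanSpace ℝ t)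
  simp only [EuclideanSpace.norm_eq, Real.norm_eq_abs, sq_abs, WithLp.ofLp_sum,
    Finset.sum_apply] at this
  simpa only [← Finset.sum_coe_sort t] using this

lemma l2norm_sum_le {ι : Type*} (s : Finset ι) (v : ι → α → ℝ)
    (hv : ∀ i ∈ s, (Function.support (v i)).Finite) :
    l2norm (fun x => ∑ i ∈ s, v i x) ≤ ∑ i ∈ s, l2norm (v i) := by
  classical
  set t := (s.finite_toSet.biUnion hv).toFinset
  have hvt : ∀ i ∈ s, ∀ x ∉ t, v i x = 0 := fun i hi x hx => by
    by_contra h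
    exact hx ((Set.Finite.mem_toFinset _).mpr (Set.mem_biUnion hi h))
  rw [l2norm_eq_sqrt_sum (s := t) fun x hx => Finset.sum_eq_zero fun i hi => hvt i hi x hx,
    Finset.sum_congr rfl fun i hi => l2norm_eq_sqrt_sum (hvt i hi)]
  exact sqrt_sum_sq_sum_le s t v

lemma l2norm_le_of_fiber_le {h : α × β → ℝ} {k : α → ℝ} (hh : (Function.support h).Finite)
    (hk : (Function.support k).Finite) (hfib : ∀ a, l2norm (fun b => h (a, b)) ≤ k a) :
    l2norm h ≤ l2norm k := by
  classical
  set S := hh.toFinset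
  set A := S.image Prod.fst ∪ hk.toFinset
  set B := S.image Prod.snd
  have hS : ∀ {p}, h p ≠ 0 → p ∈ S := fun hp => (Set.Finite.mem_toFinset _).mpr hp
  have hhB : ∀ a, ∀ b ∉ B, h (a, b) = 0 := fun a b hb => by
    by_contra hab
    exact hb (Finset.mem_image_of_mem Prod.snd (hS hab))
  have hhAB : ∀ p ∉ A ×ˢ B, h p = 0 := fun p hp => by
    by_contra hp'
    exact hp (Finset.mem_product.mpr
      ⟨Finset.mem_union_left _ (Finset.mem_image_of_mem _ (hS hp')),
        Finset.mem_image_of_mem _ (hS hp')⟩)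
  have hkA : ∀ a ∉ A, k a = 0 := fun a ha => by
    by_contra hka
    exact ha (Finset.mem_union_right _ ((Set.Finite.mem_toFinset _).mpr hka))
  rw [← pow_le_pow_iff_left₀ (l2norm_nonneg h) (l2norm_nonneg k) two_ne_zero,
    l2norm_sq_eq_sum hhAB, l2norm_sq_eq_sum hkA, Finset.sum_product]
  gcongr with a
  rw [← l2norm_sq_eq_sum (hhB a)]
  exact pow_le_pow_left₀ (l2norm_nonneg _) (hfib a) 2

end L2

section Convolution

open Pointwise

variable {G : Type*} [Group G]

lemma conv_eq_sum_of_support_subset {f : G →₀ ℝ} {s : Finset G} (hs : f.support ⊆ s)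
    (g : G →₀ ℝ) (γ : G) : conv f g γ = ∑ μ ∈ s, f μ * g (μ⁻¹ * γ) :=
  Finset.sum_subset hs fun μ _ hμ => by rw [Finsupp.notMem_support_iff.mp hμ, zero_mul]

lemma support_conv_finite (f g : G →₀ ℝ) : (Function.support (conv f g)).Finite := by
  classical
  refine (f.support * g.support).finite_toSet.subset fun γ hγ => ?_
  obtain ⟨μ, hμ, hne⟩ := Finset.exists_ne_zero_of_sum_ne_zero hγ
  have hg : μ⁻¹ * γ ∈ g.support := Finsupp.mem_support_iff.mpr (right_ne_zero_of_mul hne)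
  exact Finset.mem_coe.mpr (Finset.mem_mul.mpr ⟨μ, hμ, _, hg, mul_inv_cancel_left μ γ⟩)

end Convolution

noncomputable def fiberNorm {α β : Type*} (f : α × β →₀ ℝ) : α →₀ ℝ :=
  f.curry.mapRange (fun h : β →₀ ℝ => l2norm ⇑h) (by simp [l2norm])

lemma support_fiberNorm_subset {α β : Type*} (f : α × β →₀ ℝ) :
    (fiberNorm f).support ⊆ f.curry.support :=
  Finsupp.support_mapRange

lemma l2norm_fiberNorm {α β : Type*} (f : α × β →₀ ℝ) : l2norm (fiberNorm f) = l2norm f := by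
  rw [← pow_left_inj₀ (l2norm_nonneg _) (l2norm_nonneg _) two_ne_zero, l2norm_sq_finsupp,
    fiberNorm, Finsupp.sum_mapRange_index fun _ => by simp, l2norm_sq_finsupp,
    ← Finsupp.sum_curry_index f fun _ _ c => c ^ 2]
  simp only [l2norm_sq_finsupp]

lemma conv_prod_apply {G₁ G₂ : Type*} [Group G₁] [Group G₂] (f g : G₁ × G₂ →₀ ℝ)
    (γ₁ : G₁) (γ₂ : G₂) :
    conv f g (γ₁, γ₂) = ∑ a ∈ f.curry.support, conv (f.curry a) (g.curry (a⁻¹ * γ₁)) γ₂ :=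
  (Finsupp.sum_curry_index f fun a b c => c * g ((a, b)⁻¹ * (γ₁, γ₂))).symm

/-- `HasRD G L` unfolds to `∃ P, IsRDBound G L P`. -/
def IsRDBound (G : Type*) [Group G] (L : G → ℝ) (P : Polynomial ℝ) : Prop :=
  ∀ r : ℝ, 0 < r → ∀ f g : G →₀ ℝ,
    (∀ x, 0 ≤ f x) → (∀ x, 0 ≤ g x) → (∀ x ∈ f.support, L x ≤ r) →
    l2norm (conv f g) ≤ P.eval r * l2norm (f : G → ℝ) * l2norm (g : G → ℝ)

namespace IsRDBound

variable {G₁ G₂ : Type*} [Group G₁] [Group G₂] {L₁ : G₁ → ℝ} {L₂ : G₂ → ℝ}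
  {P₁ P₂ : Polynomial ℝ}

lemma mono (h : IsRDBound G₁ L₁ P₁) (hP : ∀ r, 0 < r → P₁.eval r ≤ P₂.eval r) :
    IsRDBound G₁ L₁ P₂ := fun r hr f g hf hg hsupp =>
  (h r hr f g hf hg hsupp).trans <| mul_le_mul_of_nonneg_right
    (mul_le_mul_of_nonneg_right (hP r hr) (l2norm_nonneg _)) (l2norm_nonneg _)

theorem prod (h₁ : IsRDBound G₁ L₁ P₁) (h₂ : IsRDBound G₂ L₂ P₂)
    (hP₂ : ∀ r, 0 < r → 0 ≤ P₂.eval r) (hL₁ : ∀ a, 0 ≤ L₁ a) (hL₂ : ∀ b, 0 ≤ L₂ b) :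
    IsRDBound (G₁ × G₂) (fun p => L₁ p.1 + L₂ p.2) (P₁ * P₂) := by
  classical
  intro r hr f g hf hg hsupp
  set F := fiberNorm f
  set Γ := fiberNorm g
  have hslice : ∀ a c, l2norm (conv (f.curry a) (g.curry c)) ≤ P₂.eval r * (F a * Γ c) :=
    fun a c => by
      rw [← mul_assoc]
      exact h₂ r hr (f.curry a) (g.curry c) (fun b => hf (a, b)) (fun b => hg (c, b))
        fun b hb => (le_add_of_nonneg_left (hL₁ a)).trans <| hsupp (a, b) <|
          Finsupp.mem_support_iff.mpr (Finsupp.mem_support_iff.mp hb : f.curry a b ≠ 0)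
  have hfiber : ∀ γ₁, l2norm (fun γ₂ => conv f g (γ₁, γ₂)) ≤ P₂.eval r * conv F Γ γ₁ := by
    intro γ₁
    simp only [conv_prod_apply]
    calc _ ≤ ∑ a ∈ f.curry.support, l2norm (conv (f.curry a) (g.curry (a⁻¹ * γ₁))) :=
          l2norm_sum_le _ _ fun _ _ => support_conv_finite _ _
      _ ≤ ∑ a ∈ f.curry.support, P₂.eval r * (F a * Γ (a⁻¹ * γ₁)) :=
          Finset.sum_le_sum fun a _ => hslice _ _
      _ = P₂.eval r * conv F Γ γ₁ := by
          rw [← Finset.mul_sum, conv_eq_sum_of_support_subset (support_fiberNorm_subset f)]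
  have hF : ∀ a ∈ F.support, L₁ a ≤ r := fun a ha => by
    obtain ⟨p, hp, rfl⟩ := Finset.mem_image.mp
      ((Finsupp.support_curry f).subset (support_fiberNorm_subset f ha))
    exact (le_add_of_nonneg_right (hL₂ p.2)).trans (hsupp p hp)
  calc l2norm (conv f g)
      ≤ l2norm (fun γ₁ => P₂.eval r * conv F Γ γ₁) :=
        l2norm_le_of_fiber_le (support_conv_finite f g)
          ((support_conv_finite F Γ).subset (Function.support_mul_subset_right _ _)) hfiber
    _ = P₂.eval r * l2norm (conv F Γ) := l2norm_const_mul (hP₂ r hr) _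
    _ ≤ P₂.eval r * (P₁.eval r * l2norm F * l2norm Γ) :=
        mul_le_mul_of_nonneg_left
          (h₁ r hr F Γ (fun _ => l2norm_nonneg _) (fun _ => l2norm_nonneg _) hF) (hP₂ r hr)
    _ = (P₁ * P₂).eval r * l2norm f * l2norm g := by
        rw [l2norm_fiberNorm, l2norm_fiberNorm, Polynomial.eval_mul]
        ring

end IsRDBound

theorem HasRD.prod {G₁ G₂ : Type*} [Group G₁] [Group G₂] {L₁ : G₁ → ℝ} {L₂ : G₂ → ℝ}
    (h₁ : HasRD G₁ L₁) (h₂ : HasRD G₂ L₂) (hL₁ : ∀ a, 0 ≤ L₁ a) (hL₂ : ∀ b, 0 ≤ L₂ b) :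
    HasRD (G₁ × G₂) (fun p => L₁ p.1 + L₂ p.2) := by
  obtain ⟨P₁, hP₁ : IsRDBound G₁ L₁ P₁⟩ := h₁
  obtain ⟨P₂, hP₂ : IsRDBound G₂ L₂ P₂⟩ := h₂
  have heval : ∀ r, (P₂ ^ 2 + 1).eval r = P₂.eval r ^ 2 + 1 := fun r => by simp
  refine ⟨P₁ * (P₂ ^ 2 + 1), hP₁.prod (hP₂.mono fun r _ => ?_) (fun r _ => ?_) hL₁ hL₂⟩ <;>
    rw [heval]
  · nlinarith [sq_nonneg (P₂.eval r - 1)]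
  · positivity

theorem stmt19_general {G₁ G₂ : Type*} [Group G₁] [Group G₂]
    (S₁ : Set G₁) (S₂ : Set G₂)
    (hRD₁ : HasRD G₁ (fun g => (wordLength S₁ g : ℝ)))
    (hRD₂ : HasRD G₂ (fun g => (wordLength S₂ g : ℝ))) :
    HasRD (G₁ × G₂)
      (fun p => (wordLength S₁ p.1 : ℝ) + (wordLength S₂ p.2 : ℝ)) :=
  hRD₁.prod hRD₂ (fun _ => Nat.cast_nonneg _) (fun _ => Nat.cast_nonneg _)

/-- The Rapid Decay property passes to direct products, using the sum of the word
lengths as length function on `G₁ × G₂`. -/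
theorem stmt19 {G₁ G₂ : Type*} [Group G₁] [Group G₂]
    (S₁ : Set G₁) (S₂ : Set G₂) (h₁fin : S₁.Finite) (h₂fin : S₂.Finite)
    (h₁gen : Subgroup.closure S₁ = ⊤) (h₂gen : Subgroup.closure S₂ = ⊤)
    (hRD₁ : HasRD G₁ (fun g => (wordLength S₁ g : ℝ)))
    (hRD₂ : HasRD G₂ (fun g => (wordLength S₂ g : ℝ))) :
    HasRD (G₁ × G₂)
      (fun p => (wordLength S₁ p.1 : ℝ) + (wordLength S₂ p.2 : ℝ)) :=
  stmt19_general S₁ S₂ hRD₁ hRD₂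
end
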